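/- For arbitrary nonzero vectors ξ, η in ℝ^d, writing η∘ = η/|η| and π_ξ^⊥ for the orthogonal projection onto the orthogonal complement of span(ξ), one has max{|ξ|, |η|} · |π_ξ^⊥(η∘)| ≤ √2 · |ξ − η|. -/

import Mathlib

/-!
If `θ` is the angle between `ξ` and `η`, the left-hand norm is `|sin θ|`, and `‖ξ‖ |sin θ|`,
`‖η‖ |sin θ|` are the distances from `ξ` to `ℝ η` and from `η` to `ℝ ξ`, both at most `‖ξ - η‖`;
so the inequality even holds with `1` in place of `√2`. Algebraically, with `c = cos θ`,
`‖ξ - η‖² - ‖ξ‖² (1 - c²) = (‖ξ‖ c - ‖η‖)²`.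
-/

open RealInnerProductSpace

section InnerProductSpace

variable {E : Type*} [NormedAddCommGroup E] [InnerProductSpace ℝ E]

theorem norm_sub_inner_smul_sq_of_norm_eq_one {u : E} (hu : ‖u‖ = 1) (v : E) :
    ‖v - ⟪v, u⟫ • u‖ ^ 2 = ‖v‖ ^ 2 - ⟪v, u⟫ ^ 2 := by
  rw [norm_sub_sq_real, real_inner_smul_right, norm_smul, hu, Real.norm_eq_abs, mul_one, sq_abs]
  ring

theorem inner_eq_norm_mul_norm_mul_inner_normalize {x y : E} (hx : x ≠ 0) (hy : y ≠ 0) :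
    ⟪x, y⟫ = ‖x‖ * ‖y‖ * ⟪‖y‖⁻¹ • y, ‖x‖⁻¹ • x⟫ := by
  rw [real_inner_smul_left, real_inner_smul_right, real_inner_comm]
  field_simp

theorem sq_norm_mul_one_sub_inner_normalize_sq_le {x y : E} (hx : x ≠ 0) (hy : y ≠ 0) :
    ‖x‖ ^ 2 * (1 - ⟪‖y‖⁻¹ • y, ‖x‖⁻¹ • x⟫ ^ 2) ≤ ‖x - y‖ ^ 2 := by
  set c := ⟪‖y‖⁻¹ • y, ‖x‖⁻¹ • x⟫
  have hxy : ‖x - y‖ ^ 2 = ‖x‖ ^ 2 - 2 * (‖x‖ * ‖y‖ * c) + ‖y‖ ^ 2 := by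
    rw [norm_sub_sq_real, inner_eq_norm_mul_norm_mul_inner_normalize hx hy]
  nlinarith [sq_nonneg (‖x‖ * c - ‖y‖)]

theorem sq_norm_mul_one_sub_inner_normalize_sq_le' {x y : E} (hx : x ≠ 0) (hy : y ≠ 0) :
    ‖y‖ ^ 2 * (1 - ⟪‖y‖⁻¹ • y, ‖x‖⁻¹ • x⟫ ^ 2) ≤ ‖x - y‖ ^ 2 := by
  simpa only [real_inner_comm, norm_sub_rev] using
    sq_norm_mul_one_sub_inner_normalize_sq_le hy hx

end InnerProductSpace

/-- For nonzero `ξ η : ℝ^d`, with `η∘ = η/|η|` and `π_ξ^⊥` the orthogonal projection onto the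
orthogonal complement of `span ξ`, one has
`max |ξ| |η| * |π_ξ^⊥ (η∘)| ≤ √2 * |ξ - η|`. -/
theorem orthogonal_projection_distance {d : ℕ}
    (ξ η : EuclideanSpace ℝ (Fin d)) (hξ : ξ ≠ 0) (hη : η ≠ 0) :
    max ‖ξ‖ ‖η‖ *
        Norm.norm ((‖η‖⁻¹ • η) -
          (inner ℝ (‖η‖⁻¹ • η) (‖ξ‖⁻¹ • ξ) : ℝ) • (‖ξ‖⁻¹ • ξ))
      ≤ Real.sqrt 2 * ‖ξ - η‖ := by
  have hξ₁ : ‖‖ξ‖⁻¹ • ξ‖ = 1 := norm_smul_inv_norm hξ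
  have hη₁ : ‖‖η‖⁻¹ • η‖ = 1 := norm_smul_inv_norm hη
  set w := (‖η‖⁻¹ • η) - (inner ℝ (‖η‖⁻¹ • η) (‖ξ‖⁻¹ • ξ) : ℝ) • (‖ξ‖⁻¹ • ξ)
  have hw : ‖w‖ ^ 2 = 1 - ⟪‖η‖⁻¹ • η, ‖ξ‖⁻¹ • ξ⟫ ^ 2 := by
    rw [norm_sub_inner_smul_sq_of_norm_eq_one hξ₁, hη₁, one_pow]
  have hmax : max ‖ξ‖ ‖η‖ * ‖w‖ ≤ ‖ξ - η‖ := by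
    rw [max_mul_of_nonneg _ _ (norm_nonneg w)]
    refine max_le (le_of_sq_le_sq ?_ (norm_nonneg _)) (le_of_sq_le_sq ?_ (norm_nonneg _))
    · rw [mul_pow, hw]
      exact sq_norm_mul_one_sub_inner_normalize_sq_le hξ hη
    · rw [mul_pow, hw]
      exact sq_norm_mul_one_sub_inner_normalize_sq_le' hξ hη
  exact hmax.trans (le_mul_of_one_le_left (norm_nonneg _) Real.one_lt_sqrt_two.le)
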